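/- Let G be a locally compact, second countable group, let Γ be a lattice in G, and let c ≥ 1. If Γ has Property (T)_c, then G has Property (T)_c. -/

import Mathlib

open scoped ENNReal
open MeasureTheory

structure HilbRep (G : Type*) [Group G] [TopologicalSpace G] where
  (space : Type*)
  [normedAddCommGroup : NormedAddCommGroup space]
  [innerProductSpace : InnerProductSpace ℂ space]
  [completeSpace : CompleteSpace space]
  toFun : G →* (space →L[ℂ] space)ˣ

attribute [instance] HilbRep.normedAddCommGroup HilbRep.innerProductSpace HilbRep.completeSpace

namespace HilbRep

variable {G : Type*} [Group G] [TopologicalSpace G]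

/-- The bounded invertible operator associated to a group element. -/
def op (π : HilbRep G) (s : G) : π.space →L[ℂ] π.space :=
  (π.toFun s : π.space →L[ℂ] π.space)

/-- The representation is uniformly bounded by `c`. -/
def IsUB (π : HilbRep G) (c : ℝ) : Prop := ∀ s : G, ‖π.op s‖ ≤ c

/-- The representation is continuous for the strong operator topology. -/
def IsSOTContinuous (π : HilbRep G) : Prop :=
  ∀ ξ : π.space, Continuous fun s : G => π.op s ξ

/-- `π ∈ R_c(G)`: strongly continuous and uniformly bounded by `c`. -/
def IsRc (π : HilbRep G) (c : ℝ) : Prop := π.IsUB c ∧ π.IsSOTContinuous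

/-- `π` almost has invariant vectors. -/
def AlmostInvariantVectors (π : HilbRep G) : Prop :=
  ∀ Q : Set G, IsCompact Q → ∀ ε : ℝ, 0 < ε →
    ∃ ξ : π.space, ∀ s ∈ Q, ‖π.op s ξ - ξ‖ < ε * ‖ξ‖

/-- `π` has a nonzero invariant vector. -/
def HasInvariantVector (π : HilbRep G) : Prop :=
  ∃ ξ : π.space, ξ ≠ 0 ∧ ∀ s : G, π.op s ξ = ξ

end HilbRep

universe u v

/-- Property (T)_c. -/
def HasPropertyT (G : Type u) [Group G] [TopologicalSpace G] (c : ℝ) : Prop :=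
  ∀ π : HilbRep.{u, v} G, π.IsRc c → π.AlmostInvariantVectors → π.HasInvariantVector

/-- `Γ` is a lattice in `G`: a closed discrete subgroup such that `G / Γ` carries a
`G`-invariant regular Borel probability measure. -/
def IsLattice {G : Type u} [Group G] [TopologicalSpace G] [MeasurableSpace G]
    (Γ : Subgroup G) : Prop :=
  IsClosed (Γ : Set G) ∧ DiscreteTopology Γ ∧
    ∃ μ : Measure (G ⧸ Γ), IsProbabilityMeasure μ ∧ μ.Regular ∧
      ∀ g : G, Measure.map (fun x : G ⧸ Γ => g • x) μ = μ

/-!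
Let `K` be the space of `Γ`-fixed vectors of `π`. Compressing `π|Γ` to `Kᗮ` gives a
representation of `Γ` in `R_c(Γ)` without nonzero invariant vectors, because a bounded
homomorphism `Γ → K` vanishes. By Property (T)_c of `Γ` it has a spectral gap, so the
`Kᗮ`-component of an almost `G`-invariant vector is small and its `K`-component is a nonzero
`Γ`-fixed vector that is almost invariant under a prescribed compact subset of `G`. Averaging
the orbit map `gΓ ↦ π(g)κ` of such a vector `κ` against the invariant probability measure on
`G/Γ` produces a `G`-invariant vector, which stays close to `κ`, hence nonzero, once the compact
subset carries most of the mass of `G/Γ`.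
-/

theorem eq_zero_of_map_mul_of_norm_le {M E : Type*} [Monoid M] [NormedAddCommGroup E]
    [NormedSpace ℝ E] {f : M → E} (hf : ∀ a b, f (a * b) = f a + f b) {C : ℝ}
    (hC : ∀ a, ‖f a‖ ≤ C) (a : M) : f a = 0 := by
  have hpow : ∀ n : ℕ, f (a ^ n) = n • f a := by
    intro n
    induction n with
    | zero => simpa using hf 1 1
    | succ n ih => rw [pow_succ, hf, ih, succ_nsmul]
  by_contra ha
  obtain ⟨n, hn⟩ := exists_nat_gt (C / ‖f a‖)
  have hn' := hC (a ^ n)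
  rw [hpow, RCLike.norm_nsmul ℝ, nsmul_eq_mul] at hn'
  rw [div_lt_iff₀ (norm_pos_iff.2 ha)] at hn
  linarith

theorem IsOpenMap.exists_isCompact_image_superset {X Y : Type*} [TopologicalSpace X]
    [WeaklyLocallyCompactSpace X] [TopologicalSpace Y] {f : X → Y} (hf : IsOpenMap f)
    {C : Set Y} (hC : IsCompact C) (hCf : C ⊆ Set.range f) :
    ∃ Q : Set X, IsCompact Q ∧ C ⊆ f '' Q := by
  choose V hV hVx using fun x : X => exists_compact_mem_nhds x
  have hcover : C ⊆ ⋃ x, f '' interior (V x) := fun y hy => by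
    obtain ⟨x, rfl⟩ := hCf hy
    exact Set.mem_iUnion.2 ⟨x, x, mem_interior_iff_mem_nhds.2 (hVx x), rfl⟩
  obtain ⟨t, ht⟩ := hC.elim_finite_subcover _ (fun x => hf _ isOpen_interior) hcover
  refine ⟨⋃ x ∈ t, V x, t.isCompact_biUnion fun x _ => hV x, ht.trans ?_⟩
  simp only [Set.image_iUnion]
  exact Set.iUnion₂_mono fun x _ => Set.image_mono interior_subset

theorem exists_isCompact_one_sub_lt_measureReal {X : Type*} [TopologicalSpace X]
    [MeasurableSpace X] (μ : Measure X) [IsProbabilityMeasure μ] [μ.Regular] {δ : ℝ}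
    (hδ : 0 < δ) : ∃ C : Set X, IsCompact C ∧ 1 - δ < μ.real C := by
  have hlt : ENNReal.ofReal (1 - δ) < μ Set.univ := by
    rw [measure_univ, ENNReal.ofReal_lt_one]
    linarith
  obtain ⟨C, -, hC, hCμ⟩ := isOpen_univ.exists_lt_isCompact hlt
  rw [← ofReal_measureReal] at hCμ
  exact ⟨C, hC, (ENNReal.ofReal_lt_ofReal_iff'.1 hCμ).1⟩

theorem norm_integral_sub_le_of_forall_mem {α E : Type*} [MeasurableSpace α]
    [NormedAddCommGroup E] [NormedSpace ℝ E] [CompleteSpace E] {μ : Measure α}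
    [IsProbabilityMeasure μ] {f : α → E} (hf : Integrable f μ) (v : E) {s : Set α}
    (hs : MeasurableSet s) {a b : ℝ} (ha : 0 ≤ a) (hfs : ∀ x ∈ s, ‖f x - v‖ ≤ a)
    (hfb : ∀ x, ‖f x - v‖ ≤ b) :
    ‖∫ x, f x ∂μ - v‖ ≤ a + b * μ.real sᶜ := by
  have hfv : Integrable (fun x => f x - v) μ := hf.sub (integrable_const v)
  calc ‖∫ x, f x ∂μ - v‖
      = ‖(∫ x in s, (f x - v) ∂μ) + ∫ x in sᶜ, (f x - v) ∂μ‖ := by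
        rw [integral_add_compl hs hfv, integral_sub hf (integrable_const v), integral_const,
          probReal_univ, one_smul]
    _ ≤ a * μ.real s + b * μ.real sᶜ :=
        (norm_add_le _ _).trans <| add_le_add
          (norm_setIntegral_le_of_norm_le_const (measure_lt_top μ s) hfs)
          (norm_setIntegral_le_of_norm_le_const (measure_lt_top μ sᶜ) fun x _ => hfb x)
    _ ≤ a + b * μ.real sᶜ := by
        gcongr
        exact mul_le_of_le_one_right ha measureReal_le_one

instance QuotientGroup.opensMeasurableSpace {G : Type*} [Group G] [TopologicalSpace G]
    [MeasurableSpace G] [OpensMeasurableSpace G] (Γ : Subgroup G) :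
    OpensMeasurableSpace (G ⧸ Γ) where
  borel_le := MeasurableSpace.generateFrom_le fun _ hU =>
    measurableSet_quotient.2 (hU.preimage continuous_quot_mk).measurableSet

instance QuotientGroup.measurableConstSMul {G : Type*} [Group G] [TopologicalSpace G]
    [ContinuousMul G] [MeasurableSpace G] [BorelSpace G] (Γ : Subgroup G) :
    MeasurableConstSMul G (G ⧸ Γ) where
  measurable_const_smul s := QuotientGroup.measurable_from_quotient.2
    (QuotientGroup.measurable_coe.comp (continuous_const_mul s).measurable)

namespace HilbRep

section Basic

variable {G : Type*} [Group G] [TopologicalSpace G] (π : HilbRep G)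

@[simp]
theorem op_mul_apply (a b : G) (x : π.space) : π.op (a * b) x = π.op a (π.op b x) := by
  simp [op, map_mul]

@[simp]
theorem op_one_apply (x : π.space) : π.op 1 x = x := by
  simp [op]

variable {π} {c : ℝ}

theorem IsUB.nonneg (hπ : π.IsUB c) : 0 ≤ c := (norm_nonneg _).trans (hπ 1)

theorem IsUB.norm_op_apply_le (hπ : π.IsUB c) (s : G) (x : π.space) :
    ‖π.op s x‖ ≤ c * ‖x‖ :=
  ((π.op s).le_opNorm x).trans (mul_le_mul_of_nonneg_right (hπ s) (norm_nonneg x))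

theorem IsUB.norm_op_apply_sub_le (hπ : π.IsUB c) (s : G) (x : π.space) :
    ‖π.op s x - x‖ ≤ (c + 1) * ‖x‖ := by
  linarith [norm_sub_le (π.op s x) x, hπ.norm_op_apply_le s x]

theorem IsUB.norm_op_apply_sub_le_add (hπ : π.IsUB c) (s : G) (ξ κ : π.space) :
    ‖π.op s κ - κ‖ ≤ ‖π.op s ξ - ξ‖ + (c + 1) * ‖ξ - κ‖ := by
  have h : π.op s κ - κ = (π.op s ξ - ξ) - (π.op s (ξ - κ) - (ξ - κ)) := by
    rw [map_sub]; abel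
  rw [h]
  exact (norm_sub_le _ _).trans (add_le_add_right (hπ.norm_op_apply_sub_le s _) _)

theorem AlmostInvariantVectors.exists_ne_zero (hπ : π.AlmostInvariantVectors) {Q : Set G}
    (hQ : IsCompact Q) {ε : ℝ} (hε : 0 < ε) :
    ∃ ξ : π.space, ξ ≠ 0 ∧ ∀ s ∈ Q, ‖π.op s ξ - ξ‖ < ε * ‖ξ‖ := by
  obtain ⟨ξ, hξ⟩ := hπ (insert 1 Q) (hQ.insert 1) ε hε
  refine ⟨ξ, fun h0 => ?_, fun s hs => hξ s (Set.mem_insert_of_mem 1 hs)⟩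
  simpa [h0] using hξ 1 (Set.mem_insert 1 Q)

end Basic

section FixedVectors

variable {G : Type*} [Group G] [TopologicalSpace G] (π : HilbRep G) (H : Subgroup G)

def fixedSubmodule : Submodule ℂ π.space where
  carrier := {ξ | ∀ h : H, π.op h ξ = ξ}
  add_mem' ha hb h := by rw [map_add, ha h, hb h]
  zero_mem' _ := map_zero _
  smul_mem' r _ hx h := by rw [map_smul, hx h]

theorem mem_fixedSubmodule {ξ : π.space} : ξ ∈ π.fixedSubmodule H ↔ ∀ h : H, π.op h ξ = ξ :=
  Iff.rfl

theorem isClosed_fixedSubmodule : IsClosed (π.fixedSubmodule H : Set π.space) := by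
  have : (π.fixedSubmodule H : Set π.space) = ⋂ h : H, {ξ | π.op h ξ = ξ} := by
    ext; simp [mem_fixedSubmodule]
  rw [this]
  exact isClosed_iInter fun h => isClosed_eq (π.op h).continuous continuous_id

instance : CompleteSpace (π.fixedSubmodule H) :=
  (π.isClosed_fixedSubmodule H).completeSpace_coe

noncomputable def fixedOrthOp (h : H) : (π.fixedSubmodule H)ᗮ →L[ℂ] (π.fixedSubmodule H)ᗮ :=
  (π.fixedSubmodule H)ᗮ.orthogonalProjectionOnto ∘L π.op h ∘L (π.fixedSubmodule H)ᗮ.subtypeL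

theorem fixedOrthOp_apply (h : H) (ζ : (π.fixedSubmodule H)ᗮ) :
    π.fixedOrthOp H h ζ = (π.fixedSubmodule H)ᗮ.orthogonalProjectionOnto (π.op h ζ) :=
  rfl

-- `π h` fixes the component of `x` in `K = Kᗮᗮ`, which the projection onto `Kᗮ` kills.
theorem fixedOrthOp_orthogonalProjectionOnto (h : H) (x : π.space) :
    π.fixedOrthOp H h ((π.fixedSubmodule H)ᗮ.orthogonalProjectionOnto x) =
      (π.fixedSubmodule H)ᗮ.orthogonalProjectionOnto (π.op h x) := by
  set K := π.fixedSubmodule H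
  have hk : x - Kᗮ.starProjection x ∈ K :=
    K.orthogonal_orthogonal.le (Kᗮ.sub_starProjection_mem_orthogonal x)
  have hPk : Kᗮ.orthogonalProjectionOnto (π.op h (x - Kᗮ.starProjection x)) = 0 := by
    rw [hk h, Submodule.orthogonalProjectionOnto_eq_zero_iff]
    exact K.le_orthogonal_orthogonal hk
  rw [map_sub, map_sub, sub_eq_zero] at hPk
  exact hPk.symm

noncomputable def fixedOrthHom : H →* ((π.fixedSubmodule H)ᗮ →L[ℂ] (π.fixedSubmodule H)ᗮ) where
  toFun := π.fixedOrthOp H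
  map_one' := ContinuousLinearMap.ext fun ζ => by
    simp [fixedOrthOp_apply, Submodule.orthogonalProjectionOnto_mem_subspace_eq_self]
  map_mul' a b := ContinuousLinearMap.ext fun ζ => by
    rw [mul_apply_eq_comp, fixedOrthOp_apply π H b,
      fixedOrthOp_orthogonalProjectionOnto, fixedOrthOp_apply, Subgroup.coe_mul, op_mul_apply]

-- A model on `Kᗮ` of the quotient representation of `H` on `π.space ⧸ K`.
noncomputable def fixedOrthRep : HilbRep H where
  space := (π.fixedSubmodule H)ᗮ
  toFun := (π.fixedOrthHom H).toHomUnits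

theorem fixedOrthRep_op (h : H) : (π.fixedOrthRep H).op h = π.fixedOrthOp H h :=
  rfl

variable {π} {c : ℝ}

theorem IsUB.fixedOrthRep (hπ : π.IsUB c) : (π.fixedOrthRep H).IsUB c := fun h => by
  rw [fixedOrthRep_op, fixedOrthOp]
  calc _ ≤ ‖(π.fixedSubmodule H)ᗮ.orthogonalProjectionOnto‖ *
        (‖π.op h‖ * ‖(π.fixedSubmodule H)ᗮ.subtypeL‖) :=
        (ContinuousLinearMap.opNorm_comp_le _ _).trans
          (mul_le_mul_of_nonneg_left (ContinuousLinearMap.opNorm_comp_le _ _) (norm_nonneg _))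
    _ ≤ 1 * (‖π.op h‖ * 1) := by
        gcongr
        · exact Submodule.orthogonalProjectionOnto_norm_le _
        · exact Submodule.norm_subtypeL_le _
    _ ≤ c := by simpa using hπ h

theorem isSOTContinuous_fixedOrthRep [DiscreteTopology H] :
    (π.fixedOrthRep H).IsSOTContinuous :=
  fun _ => continuous_of_discreteTopology

-- If `ζ ∈ Kᗮ` is fixed by the compression, `h ↦ π h ζ - ζ` is a bounded homomorphism `H → K`.
theorem not_hasInvariantVector_fixedOrthRep (hπ : π.IsUB c) :
    ¬ (π.fixedOrthRep H).HasInvariantVector := by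
  rintro ⟨ζ, hζ0, hζ⟩
  set K := π.fixedSubmodule H
  change Kᗮ at ζ
  have hζ' : ∀ h : H, Kᗮ.orthogonalProjectionOnto (π.op h ζ) = ζ := fun h => hζ h
  have hdK : ∀ h : H, π.op h ζ - ζ ∈ K := fun h => by
    have := Kᗮ.sub_starProjection_mem_orthogonal (π.op h ζ)
    rw [Submodule.starProjection_apply, hζ' h] at this
    exact K.orthogonal_orthogonal.le this
  have hd : ∀ h : H, π.op h ζ - ζ = 0 := by
    refine eq_zero_of_map_mul_of_norm_le (fun a b => ?_) (hπ.norm_op_apply_sub_le · _)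
    have hb : π.op a (π.op b ζ - ζ) = π.op b ζ - ζ := hdK b a
    rw [Subgroup.coe_mul, op_mul_apply, ← hb, map_sub]
    abel
  have hζK : (ζ : π.space) ∈ K := fun h => sub_eq_zero.1 (hd h)
  exact hζ0 (Subtype.ext ((Submodule.orthogonal_disjoint K).le_bot ⟨hζK, ζ.2⟩))

end FixedVectors

section Averaging

variable {G : Type*} [Group G] [TopologicalSpace G] (π : HilbRep G) (Γ : Subgroup G)

def orbitMap (κ : π.fixedSubmodule Γ) : G ⧸ Γ → π.space :=
  Quotient.lift (fun g => π.op g κ) fun a b hab => by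
    obtain ⟨γ, rfl⟩ : ∃ γ : Γ, a * γ = b := ⟨⟨a⁻¹ * b, QuotientGroup.leftRel_apply.1 hab⟩, by simp⟩
    simp [κ.2 γ]

variable {π Γ} (κ : π.fixedSubmodule Γ)

@[simp]
theorem orbitMap_mk (g : G) : π.orbitMap Γ κ g = π.op g κ :=
  rfl

theorem orbitMap_smul (s : G) (x : G ⧸ Γ) :
    π.orbitMap Γ κ (s • x) = π.op s (π.orbitMap Γ κ x) := by
  induction x using QuotientGroup.induction_on with
  | H g => simp [MulAction.Quotient.smul_mk]

theorem IsSOTContinuous.continuous_orbitMap (hπ : π.IsSOTContinuous) :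
    Continuous (π.orbitMap Γ κ) :=
  (hπ κ).quotient_lift _

theorem IsUB.norm_orbitMap_le {c : ℝ} (hπ : π.IsUB c) (x : G ⧸ Γ) :
    ‖π.orbitMap Γ κ x‖ ≤ c * ‖(κ : π.space)‖ := by
  induction x using QuotientGroup.induction_on with
  | H g => exact hπ.norm_op_apply_le g κ

theorem IsUB.norm_orbitMap_sub_le {c : ℝ} (hπ : π.IsUB c) (x : G ⧸ Γ) :
    ‖π.orbitMap Γ κ x - κ‖ ≤ (c + 1) * ‖(κ : π.space)‖ := by
  induction x using QuotientGroup.induction_on with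
  | H g => exact hπ.norm_op_apply_sub_le g κ

variable [IsTopologicalGroup G] [SecondCountableTopology G] [MeasurableSpace G]
  [BorelSpace G] {c : ℝ}

theorem IsRc.integrable_orbitMap (hπ : π.IsRc c) (μ : Measure (G ⧸ Γ)) [IsFiniteMeasure μ] :
    Integrable (π.orbitMap Γ κ) μ :=
  .of_bound (hπ.2.continuous_orbitMap κ).aestronglyMeasurable (c * ‖(κ : π.space)‖) <|
    .of_forall (hπ.1.norm_orbitMap_le κ)

theorem IsRc.op_integral_orbitMap (hπ : π.IsRc c) {μ : Measure (G ⧸ Γ)} [IsFiniteMeasure μ]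
    [SMulInvariantMeasure G (G ⧸ Γ) μ] (s : G) :
    π.op s (∫ x, π.orbitMap Γ κ x ∂μ) = ∫ x, π.orbitMap Γ κ x ∂μ := by
  rw [← (π.op s).integral_comp_comm (hπ.integrable_orbitMap κ μ)]
  simp_rw [← orbitMap_smul]
  exact integral_smul_eq_self _

theorem IsRc.norm_integral_orbitMap_sub_le (hπ : π.IsRc c) (μ : Measure (G ⧸ Γ))
    [IsProbabilityMeasure μ] {Q : Set G} {C : Set (G ⧸ Γ)} {a : ℝ} (ha : 0 ≤ a)
    (hQ : ∀ g ∈ Q, ‖π.op g κ - κ‖ ≤ a) (hCQ : C ⊆ (↑) '' Q) :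
    ‖∫ x, π.orbitMap Γ κ x ∂μ - κ‖ ≤ a + (c + 1) * ‖(κ : π.space)‖ * (1 - μ.real C) := by
  set s := {x | ‖π.orbitMap Γ κ x - κ‖ ≤ a}
  have hs : MeasurableSet s :=
    (isClosed_le ((hπ.2.continuous_orbitMap κ).sub continuous_const).norm
      continuous_const).measurableSet
  have hCs : C ⊆ s := by
    rintro _ hx
    obtain ⟨g, hg, rfl⟩ := hCQ hx
    exact hQ g hg
  have hc : 0 ≤ c := hπ.1.nonneg
  calc ‖∫ x, π.orbitMap Γ κ x ∂μ - κ‖ ≤ a + (c + 1) * ‖(κ : π.space)‖ * μ.real sᶜ :=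
        norm_integral_sub_le_of_forall_mem (hπ.integrable_orbitMap κ μ) κ hs ha (fun _ hx => hx)
          (hπ.1.norm_orbitMap_sub_le κ)
    _ ≤ a + (c + 1) * ‖(κ : π.space)‖ * (1 - μ.real C) := by
        rw [probReal_compl_eq_one_sub hs]
        gcongr (a + (c + 1) * ‖(κ : π.space)‖ * (1 - ?_))
        exact measureReal_mono hCs

end Averaging

end HilbRep

namespace HasPropertyT

open HilbRep

variable {G : Type u} [Group G] [TopologicalSpace G] {H : Subgroup G} [DiscreteTopology H]
  {c : ℝ} {π : HilbRep.{u, v} G}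

theorem exists_spectralGap (hT : HasPropertyT.{u, v} H c) (hπ : π.IsUB c) :
    ∃ Q : Set G, IsCompact Q ∧ ∃ ε > 0, ∀ ξ : π.space, ∃ g ∈ Q,
      ε * ‖ξ - (π.fixedSubmodule H).starProjection ξ‖ ≤ ‖π.op g ξ - ξ‖ := by
  have hσ : ¬ (π.fixedOrthRep H).AlmostInvariantVectors := fun h =>
    π.not_hasInvariantVector_fixedOrthRep H hπ
      (hT _ ⟨hπ.fixedOrthRep H, π.isSOTContinuous_fixedOrthRep H⟩ h)
  simp only [AlmostInvariantVectors, not_forall, not_exists, not_lt] at hσ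
  obtain ⟨Q, hQ, ε, hε, hgap⟩ := hσ
  refine ⟨(↑) '' Q, hQ.image continuous_subtype_val, ε, hε, fun ξ => ?_⟩
  set K := π.fixedSubmodule H
  obtain ⟨h, hhQ, hh⟩ := hgap (Kᗮ.orthogonalProjectionOnto ξ)
  refine ⟨h, ⟨h, hhQ, rfl⟩, ?_⟩
  replace hh :
      ε * ‖Kᗮ.orthogonalProjectionOnto ξ‖ ≤ ‖Kᗮ.orthogonalProjectionOnto (π.op h ξ - ξ)‖ := by
    rwa [map_sub, ← fixedOrthOp_orthogonalProjectionOnto]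
  calc ε * ‖ξ - K.starProjection ξ‖ = ε * ‖Kᗮ.orthogonalProjectionOnto ξ‖ := by
        rw [← K.starProjection_orthogonal_val]; rfl
    _ ≤ ‖π.op h ξ - ξ‖ := hh.trans (Kᗮ.norm_orthogonalProjectionOnto_apply_le _)

theorem exists_almostInvariant_fixedVector (hT : HasPropertyT.{u, v} H c) (hπ : π.IsUB c)
    (hAI : π.AlmostInvariantVectors) {Q : Set G} (hQ : IsCompact Q) {ε : ℝ} (hε : 0 < ε) :
    ∃ κ : π.fixedSubmodule H, κ ≠ 0 ∧ ∀ g ∈ Q, ‖π.op g κ - κ‖ ≤ ε * ‖(κ : π.space)‖ := by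
  obtain ⟨Q₀, hQ₀, ε₀, hε₀, hgap⟩ := hT.exists_spectralGap hπ
  have hc := hπ.nonneg
  set t := min (1 / 2) (ε / (2 * (ε₀ + c + 1)))
  have ht : 0 < t := by positivity
  have ht_half : t ≤ 1 / 2 := min_le_left _ _
  have ht_eps : t ≤ ε / (2 * (ε₀ + c + 1)) := min_le_right _ _
  obtain ⟨ξ, hξ0, hξ⟩ := hAI.exists_ne_zero (hQ.union hQ₀) (mul_pos hε₀ ht)
  set κ := (π.fixedSubmodule H).orthogonalProjectionOnto ξ
  have hξκ : ‖ξ - κ‖ ≤ t * ‖ξ‖ := by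
    obtain ⟨g₀, hg₀, hle⟩ := hgap ξ
    change ε₀ * ‖ξ - κ‖ ≤ _ at hle
    refine le_of_mul_le_mul_left ?_ hε₀
    linarith [hξ g₀ (Or.inr hg₀)]
  have hξ2κ : ‖ξ‖ ≤ 2 * ‖(κ : π.space)‖ := by
    linarith [norm_le_norm_sub_add ξ κ, mul_le_mul_of_nonneg_right ht_half (norm_nonneg ξ)]
  refine ⟨κ, fun hκ => hξ0 (norm_eq_zero.1 ?_), fun g hg => ?_⟩
  · rw [hκ, ZeroMemClass.coe_zero, norm_zero, mul_zero] at hξ2κ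
    exact le_antisymm hξ2κ (norm_nonneg ξ)
  · calc ‖π.op g κ - κ‖ ≤ ‖π.op g ξ - ξ‖ + (c + 1) * ‖ξ - κ‖ := hπ.norm_op_apply_sub_le_add g ξ κ
      _ ≤ ε₀ * t * ‖ξ‖ + (c + 1) * (t * ‖ξ‖) := by gcongr; exact (hξ g (Or.inl hg)).le
      _ = t * (ε₀ + c + 1) * ‖ξ‖ := by ring
      _ ≤ t * (ε₀ + c + 1) * (2 * ‖(κ : π.space)‖) := by gcongr
      _ ≤ ε * ‖(κ : π.space)‖ := by
        rw [le_div_iff₀ (by positivity)] at ht_eps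
        nlinarith [norm_nonneg (κ : π.space)]

end HasPropertyT

theorem propertyT_of_lattice_propertyT_general {G : Type u} [Group G] [TopologicalSpace G]
    [IsTopologicalGroup G] [LocallyCompactSpace G] [SecondCountableTopology G]
    [MeasurableSpace G] [BorelSpace G] (Γ : Subgroup G) (hΓ : IsLattice Γ)
    (c : ℝ) (hT : HasPropertyT.{u, v} ↥Γ c) :
    HasPropertyT.{u, v} G c := by
  intro π hπ hAI
  obtain ⟨-, hdisc, μ, hμ, hreg, hinv⟩ := hΓ
  have : SMulInvariantMeasure G (G ⧸ Γ) μ := ((smulInvariantMeasure_tfae G μ).out 0 5).2 hinv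
  have hc := hπ.1.nonneg
  obtain ⟨C, hC, hCμ⟩ := exists_isCompact_one_sub_lt_measureReal μ
    (show 0 < 1 / 4 / (c + 1) by positivity)
  obtain ⟨Q, hQ, hCQ⟩ := QuotientGroup.isOpenMap_coe.exists_isCompact_image_superset hC
    fun x _ => QuotientGroup.mk_surjective x
  obtain ⟨κ, hκ0, hκQ⟩ := hT.exists_almostInvariant_fixedVector hπ.1 hAI hQ (ε := 1 / 4)
    (by norm_num)
  refine ⟨∫ x, π.orbitMap Γ κ x ∂μ, fun h0 => hκ0 ?_, hπ.op_integral_orbitMap κ⟩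
  have hclose := hπ.norm_integral_orbitMap_sub_le κ μ (by positivity) hκQ hCQ
  rw [h0, zero_sub, norm_neg] at hclose
  have hmass : (c + 1) * (1 - μ.real C) < 1 / 4 := (lt_div_iff₀' (by positivity)).1 (by linarith)
  exact Subtype.ext (norm_eq_zero.1 (by nlinarith [norm_nonneg (κ : π.space)]))

theorem propertyT_of_lattice_propertyT {G : Type u} [Group G] [TopologicalSpace G]
    [IsTopologicalGroup G] [LocallyCompactSpace G] [SecondCountableTopology G]
    [MeasurableSpace G] [BorelSpace G] (Γ : Subgroup G) (hΓ : IsLattice Γ)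
    (c : ℝ) (hc : 1 ≤ c) (hT : HasPropertyT.{u, v} ↥Γ c) :
    HasPropertyT.{u, v} G c :=
  propertyT_of_lattice_propertyT_general Γ hΓ c hT
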